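/- For every θ ∈ ℝ, the function ρ is differentiable at θ with derivative ρ'(θ) = ∫_ℝ (1/(exp(2θy)+1))² (y − θ) φ(y−θ) dy. In particular, the derivative of ρ at θ coincides with the derivative at θ of the function b ↦ ∫_ℝ (1/(exp(2θy)+1))² φ(y−b) dy in which the coefficient inside the logistic weight is frozen at θ. -/

import Mathlib

open Real MeasureTheory

/-- The standard normal density. -/
noncomputable def gaussPdf (x : ℝ) : ℝ :=
  (Real.sqrt (2 * Real.pi))⁻¹ * Real.exp (-(x ^ 2) / 2)

/-- ρ(a) = ∫ (1/(exp(2ay)+1))² φ(y−a) dy. -/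
noncomputable def ρ (a : ℝ) : ℝ :=
  ∫ y : ℝ, (1 / (Real.exp (2 * a * y) + 1)) ^ 2 * gaussPdf (y - a)

/-!
Differentiate under the integral sign. The logistic weight `w(a, y)` satisfies `|w| ≤ 1` and
`|∂ₐw| ≤ |y|`, and `φ(y - a) ≤ e^{1/2} (2π)^{-1/2} e^{-(y-θ)²/4}` for `|a - θ| < 1`, so the
`a`-derivative of `w(a, y) φ(y - a)` is dominated near `θ` by a multiple of
`(1 + |y - θ|) e^{-(y-θ)²/4}`. Of the two terms of the derivative at `θ`, the one coming from
`∂ₐw` integrates to zero: it is `-4y` times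
`φ(y - θ) e^{2θy} / (e^{2θy} + 1)³ = e^{-θ²/2} φ(y) / (8 cosh³ θy)`, which is even in `y`.
The other term is exactly the derivative of the integral with the coefficient frozen at `θ`.
-/

theorem integral_eq_zero_of_odd {f : ℝ → ℝ} (hf : Function.Odd f) : ∫ x, f x = 0 := by
  have h := integral_neg_eq_self f volume
  simp only [show ∀ x, f (-x) = -f x from hf, integral_neg] at h
  linarith

theorem gaussPdf_nonneg (x : ℝ) : 0 ≤ gaussPdf x := by
  unfold gaussPdf
  positivity

@[fun_prop]
theorem continuous_gaussPdf : Continuous gaussPdf := by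
  unfold gaussPdf
  fun_prop

theorem gaussPdf_sub (y a : ℝ) : gaussPdf (y - a) = ProbabilityTheory.gaussianPDFReal a 1 y := by
  simp [gaussPdf, ProbabilityTheory.gaussianPDFReal]

theorem integrable_gaussPdf_sub (a : ℝ) : Integrable fun y => gaussPdf (y - a) := by
  simpa only [gaussPdf_sub] using ProbabilityTheory.integrable_gaussianPDFReal a 1

theorem gaussPdf_add_le (x h : ℝ) :
    gaussPdf (x + h) ≤ exp (h ^ 2 / 2) * ((√(2 * π))⁻¹ * exp (-(1 / 4) * x ^ 2)) := by
  rw [gaussPdf, mul_left_comm, ← exp_add]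
  gcongr
  nlinarith [sq_nonneg (x + 2 * h)]

theorem integrable_one_add_abs_mul_exp_neg_mul_sq {b : ℝ} (hb : 0 < b) :
    Integrable fun x : ℝ => (1 + |x|) * exp (-b * x ^ 2) := by
  have h := (integrable_exp_neg_mul_sq hb).add (integrable_mul_exp_neg_mul_sq hb).norm
  refine h.congr (.of_forall fun x => ?_)
  simp only [Pi.add_apply, norm_mul, Real.norm_eq_abs, abs_exp]
  ring

theorem hasDerivAt_gaussPdf (x : ℝ) : HasDerivAt gaussPdf (-x * gaussPdf x) x := by
  have h : HasDerivAt gaussPdf _ x :=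
    ((hasDerivAt_pow 2 x).neg.div_const 2).exp.const_mul (√(2 * π))⁻¹
  convert h using 1
  simp only [gaussPdf, Pi.neg_apply]
  ring

theorem hasDerivAt_gaussPdf_sub (y a : ℝ) :
    HasDerivAt (fun a => gaussPdf (y - a)) ((y - a) * gaussPdf (y - a)) a := by
  refine ((hasDerivAt_gaussPdf (y - a)).comp a ((hasDerivAt_id a).const_sub y)).congr_deriv ?_
  ring

theorem one_add_abs_add_abs_mul_gaussPdf_le {θ a : ℝ} (ha : dist a θ < 1) (y : ℝ) :
    (1 + |y| + |y - a|) * gaussPdf (y - a) ≤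
      (2 + |θ|) * exp (1 / 2) * (√(2 * π))⁻¹ *
        ((1 + |y - θ|) * exp (-(1 / 4) * (y - θ) ^ 2)) := by
  rw [Real.dist_eq] at ha
  have hθa : |θ - a| ≤ 1 := by rw [abs_sub_comm]; exact ha.le
  have hfactor : 1 + |y| + |y - a| ≤ (2 + |θ|) * (1 + |y - θ|) := by
    have hy : |y| ≤ |y - θ| + |θ| := by simpa using abs_add_le (y - θ) θ
    have hya : |y - a| ≤ |y - θ| + |θ - a| := by simpa using abs_add_le (y - θ) (θ - a)
    nlinarith [mul_nonneg (abs_nonneg θ) (abs_nonneg (y - θ))]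
  have hgauss :
      gaussPdf (y - a) ≤ exp (1 / 2) * ((√(2 * π))⁻¹ * exp (-(1 / 4) * (y - θ) ^ 2)) := by
    have h := gaussPdf_add_le (y - θ) (θ - a)
    rw [sub_add_sub_cancel] at h
    refine h.trans (mul_le_mul_of_nonneg_right (exp_le_exp.mpr ?_) (by positivity))
    nlinarith [sq_abs (θ - a), abs_nonneg (θ - a)]
  calc (1 + |y| + |y - a|) * gaussPdf (y - a)
      ≤ ((2 + |θ|) * (1 + |y - θ|)) *
          (exp (1 / 2) * ((√(2 * π))⁻¹ * exp (-(1 / 4) * (y - θ) ^ 2))) :=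
        mul_le_mul hfactor hgauss (gaussPdf_nonneg _) (by positivity)
    _ = _ := by ring

theorem norm_mul_gaussPdf_sub_add_norm_mul_le {θ a y u v C : ℝ} (ha : dist a θ < 1)
    (hu : ‖u‖ ≤ C * (1 + |y|)) (hv : ‖v‖ ≤ C) :
    ‖u * gaussPdf (y - a)‖ + ‖v * ((y - a) * gaussPdf (y - a))‖ ≤
      C * (2 + |θ|) * exp (1 / 2) * (√(2 * π))⁻¹ *
        ((1 + |y - θ|) * exp (-(1 / 4) * (y - θ) ^ 2)) := by
  have hC : 0 ≤ C := (norm_nonneg _).trans hv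
  have hφ := gaussPdf_nonneg (y - a)
  calc ‖u * gaussPdf (y - a)‖ + ‖v * ((y - a) * gaussPdf (y - a))‖
      = ‖u‖ * gaussPdf (y - a) + ‖v‖ * (|y - a| * gaussPdf (y - a)) := by
        simp only [norm_mul, Real.norm_eq_abs, abs_of_nonneg hφ]
    _ ≤ C * (1 + |y|) * gaussPdf (y - a) + C * (|y - a| * gaussPdf (y - a)) := by
        gcongr
    _ = C * ((1 + |y| + |y - a|) * gaussPdf (y - a)) := by ring
    _ ≤ C * ((2 + |θ|) * exp (1 / 2) * (√(2 * π))⁻¹ *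
          ((1 + |y - θ|) * exp (-(1 / 4) * (y - θ) ^ 2))) :=
        mul_le_mul_of_nonneg_left (one_add_abs_add_abs_mul_gaussPdf_le ha y) hC
    _ = _ := by ring

open Metric in
theorem hasDerivAt_integral_mul_gaussPdf_sub {g g' : ℝ → ℝ → ℝ} {C θ : ℝ}
    (hg_meas : ∀ a, AEStronglyMeasurable (g a)) (hg'_meas : AEStronglyMeasurable (g' θ))
    (hg : ∀ a y, HasDerivAt (fun a => g a y) (g' a y) a)
    (hg_le : ∀ a y, ‖g a y‖ ≤ C) (hg'_le : ∀ a y, ‖g' a y‖ ≤ C * (1 + |y|)) :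
    HasDerivAt (fun a => ∫ y, g a y * gaussPdf (y - a))
      ((∫ y, g' θ y * gaussPdf (y - θ)) + ∫ y, g θ y * ((y - θ) * gaussPdf (y - θ))) θ := by
  set bound : ℝ → ℝ := fun y => C * (2 + |θ|) * exp (1 / 2) * (√(2 * π))⁻¹ *
    ((1 + |y - θ|) * exp (-(1 / 4) * (y - θ) ^ 2))
  have hbound_int : Integrable bound :=
    ((integrable_one_add_abs_mul_exp_neg_mul_sq (b := 1 / 4) (by norm_num)).comp_sub_right
      θ).const_mul _
  have hφ_cont (a : ℝ) : Continuous fun y => gaussPdf (y - a) := by fun_prop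
  have hparts_le (y a : ℝ) (ha : a ∈ ball θ 1) :
      ‖g' a y * gaussPdf (y - a)‖ + ‖g a y * ((y - a) * gaussPdf (y - a))‖ ≤ bound y :=
    norm_mul_gaussPdf_sub_add_norm_mul_le ha (hg'_le a y) (hg_le a y)
  have hθ : θ ∈ ball θ 1 := mem_ball_self one_pos
  have hfirst_int : Integrable fun y => g' θ y * gaussPdf (y - θ) :=
    hbound_int.mono' (hg'_meas.mul (hφ_cont θ).aestronglyMeasurable)
      (.of_forall fun y => (le_add_of_nonneg_right (norm_nonneg _)).trans (hparts_le y θ hθ))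
  have hsecond_int : Integrable fun y => g θ y * ((y - θ) * gaussPdf (y - θ)) :=
    hbound_int.mono' ((hg_meas θ).mul (Continuous.aestronglyMeasurable (by fun_prop)))
      (.of_forall fun y => (le_add_of_nonneg_left (norm_nonneg _)).trans (hparts_le y θ hθ))
  have hF_int : Integrable fun y => g θ y * gaussPdf (y - θ) :=
    (integrable_gaussPdf_sub θ).bdd_mul (hg_meas θ) (.of_forall (hg_le θ))
  have h := hasDerivAt_integral_of_dominated_loc_of_deriv_le (ball_mem_nhds θ one_pos)
    (.of_forall fun a => (hg_meas a).mul (hφ_cont a).aestronglyMeasurable) hF_int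
    (hfirst_int.add hsecond_int).aestronglyMeasurable
    (.of_forall fun y a ha => (norm_add_le _ _).trans (hparts_le y a ha)) hbound_int
    (.of_forall fun y a _ => (hg a y).mul (hasDerivAt_gaussPdf_sub y a))
  rw [← integral_add hfirst_int hsecond_int]
  exact h.2

noncomputable def logisticWeight (a y : ℝ) : ℝ := (1 / (exp (2 * a * y) + 1)) ^ 2

noncomputable def logisticWeightDeriv (a y : ℝ) : ℝ :=
  -(4 * y * exp (2 * a * y)) / (exp (2 * a * y) + 1) ^ 3

theorem hasDerivAt_logisticWeight (a y : ℝ) :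
    HasDerivAt (fun a => logisticWeight a y) (logisticWeightDeriv a y) a := by
  have hexp : HasDerivAt (fun a => exp (2 * a * y) + 1) (exp (2 * a * y) * (2 * y)) a := by
    have h := (((hasDerivAt_id' a).const_mul 2).mul_const y).exp.add_const 1
    simpa only [mul_one] using h
  have hpos : exp (2 * a * y) + 1 ≠ 0 := by positivity
  refine (((hasDerivAt_const a 1).div hexp hpos).pow 2).congr_deriv ?_
  norm_num [logisticWeightDeriv]
  field_simp
  ring

theorem continuous_logisticWeight (a : ℝ) : Continuous (logisticWeight a) := by
  unfold logisticWeight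
  exact ((continuous_const.div (by fun_prop)) fun y => by positivity).pow 2

theorem continuous_logisticWeightDeriv (a : ℝ) : Continuous (logisticWeightDeriv a) := by
  unfold logisticWeightDeriv
  exact (by fun_prop : Continuous _).div (by fun_prop) fun y => by positivity

theorem norm_logisticWeight_le (a y : ℝ) : ‖logisticWeight a y‖ ≤ 1 := by
  have h : 1 / (exp (2 * a * y) + 1) ≤ 1 := by
    rw [div_le_one (by positivity)]
    linarith [exp_pos (2 * a * y)]
  rw [logisticWeight, norm_pow, Real.norm_eq_abs, abs_of_pos (by positivity)]
  exact pow_le_one₀ (by positivity) h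

theorem norm_logisticWeightDeriv_le (a y : ℝ) : ‖logisticWeightDeriv a y‖ ≤ |y| := by
  set t := exp (2 * a * y)
  have ht : 0 < t := exp_pos _
  have hcube : 4 * t ≤ (t + 1) ^ 3 := by nlinarith [sq_nonneg (t - 1)]
  rw [logisticWeightDeriv, norm_div, norm_neg, Real.norm_eq_abs, Real.norm_eq_abs,
    abs_of_pos (by positivity : 0 < (t + 1) ^ 3), div_le_iff₀ (by positivity), abs_mul,
    abs_of_pos ht, abs_mul, abs_of_pos (by norm_num : (0 : ℝ) < 4)]
  nlinarith [abs_nonneg y, mul_le_mul_of_nonneg_left hcube (abs_nonneg y)]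

theorem odd_logisticWeightDeriv_mul_gaussPdf (θ : ℝ) :
    Function.Odd fun y => logisticWeightDeriv θ y * gaussPdf (y - θ) := by
  intro y
  have hexp : exp (2 * θ * -y) = (exp (2 * θ * y))⁻¹ := by rw [← exp_neg]; ring_nf
  have hgauss : gaussPdf (-y - θ) = gaussPdf (y - θ) * (exp (2 * θ * y))⁻¹ := by
    rw [gaussPdf, gaussPdf, ← exp_neg, mul_assoc, ← exp_add]
    ring_nf
  simp only [logisticWeightDeriv, hexp, hgauss]
  have : exp (2 * θ * y) ≠ 0 := (exp_pos _).ne'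
  field_simp
  ring

/-- ρ is differentiable, with derivative at θ equal to
∫ (1/(exp(2θy)+1))²(y−θ)φ(y−θ) dy; this coincides with the derivative at θ of the
function b ↦ ∫ (1/(exp(2θy)+1))² φ(y−b) dy in which the logistic coefficient is frozen
at θ. -/
theorem stmt_14 (θ : ℝ) :
    HasDerivAt ρ
      (∫ y : ℝ, (1 / (Real.exp (2 * θ * y) + 1)) ^ 2 * ((y - θ) * gaussPdf (y - θ))) θ ∧
    HasDerivAt (fun b : ℝ => ∫ y : ℝ, (1 / (Real.exp (2 * θ * y) + 1)) ^ 2 * gaussPdf (y - b))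
      (∫ y : ℝ, (1 / (Real.exp (2 * θ * y) + 1)) ^ 2 * ((y - θ) * gaussPdf (y - θ))) θ := by
  have hderiv_le (a y : ℝ) : ‖logisticWeightDeriv a y‖ ≤ 1 * (1 + |y|) := by
    linarith [norm_logisticWeightDeriv_le a y]
  have hρ := hasDerivAt_integral_mul_gaussPdf_sub (θ := θ)
    (fun a => (continuous_logisticWeight a).aestronglyMeasurable)
    (continuous_logisticWeightDeriv θ).aestronglyMeasurable
    hasDerivAt_logisticWeight norm_logisticWeight_le hderiv_le
  rw [integral_eq_zero_of_odd (odd_logisticWeightDeriv_mul_gaussPdf θ), zero_add] at hρ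
  have hfrozen := hasDerivAt_integral_mul_gaussPdf_sub (g := fun _ => logisticWeight θ)
    (g' := fun _ _ => 0) (C := 1) (θ := θ)
    (fun _ => (continuous_logisticWeight θ).aestronglyMeasurable) aestronglyMeasurable_const
    (fun _ _ => hasDerivAt_const _ _) (fun _ => norm_logisticWeight_le θ)
    (fun _ y => by simp only [norm_zero, one_mul]; positivity)
  simp only [zero_mul, integral_zero, zero_add] at hfrozen
  exact ⟨hρ, hfrozen⟩
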